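/- In any Dallajascar (φ, H, r) on S, the induced relation ≺ is a strict total order: (a) for all x, y : S with x ≠ y, either x ≺ y or y ≺ x; and (b) for all x, y, z : S, if x ≺ y and y ≺ z then x ≺ z. -/

import Mathlib

/-!
Since every node has a unique parent, the ancestors-or-self of a node form a chain ending at the
root. Two nodes below a common ancestor `z` are either on one chain (nesting), or they sit below
the same child of `z` (recurse on that child, by well-founded induction), or below two distinct
children of `z`, which are ordered by their positions in `H z` (precedence).

For transitivity through `y`, the sibling witnesses attached to `y` both lie on `y`'s chain:
either they coincide, and positions in the duplicate-free list `H a` compose, or the higher one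
is an ancestor-or-self of the other's parent and serves as the witness for the composite.
-/

/-- A *Dallajascar* on a finite nonempty type `S`: a parent function `phi : S → Option S`,
an ordered-children function `H : S → List S`, and a root `r : S`, such that
(i) `phi r = none`; (ii) `phi x ≠ none` for `x ≠ r`; (iii) the transitive closure of the
parent relation is irreflexive; (iv) `H x` is a duplicate-free list whose members are
exactly the `y` with `phi y = some x`. -/
structure Dallajascar (S : Type*) [Fintype S] [Nonempty S] where
  phi : S → Option S
  H : S → List S
  r : S
  phi_root : phi r = none
  phi_ne_none : ∀ x : S, x ≠ r → phi x ≠ none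
  acyclic : ∀ x : S, ¬ Relation.TransGen (fun y z => phi y = some z) x x
  H_nodup : ∀ x : S, (H x).Nodup
  mem_H : ∀ x y : S, y ∈ H x ↔ phi y = some x

namespace Dallajascar

variable {S : Type*} [Fintype S] [Nonempty S]

/-- The parent relation: `P D y x` iff `x` is the parent of `y`. -/
def P (D : Dallajascar S) (y x : S) : Prop := D.phi y = some x

/-- `Nest D x y` : « x emboîte y », i.e. `x` is a strict ancestor of `y`. -/
def Nest (D : Dallajascar S) (x y : S) : Prop := Relation.TransGen D.P y x

/-- `Prec D x y` : « x précède y » : there are ancestors-or-selves `x'` of `x` and `y'`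
of `y` with a common parent `a`, `x'` occurring strictly before `y'` in `H a`. -/
def Prec (D : Dallajascar S) (x y : S) : Prop :=
  ∃ a x' y' : S, Relation.ReflTransGen D.P x x' ∧ Relation.ReflTransGen D.P y y' ∧
    D.phi x' = some a ∧ D.phi y' = some a ∧
    ∃ i j : ℕ, i < j ∧ (D.H a)[i]? = some x' ∧ (D.H a)[j]? = some y'

/-- `Lt D x y` : `x ≺ y`, i.e. `x ∫ y` or `x ⊐ y`. -/
def Lt (D : Dallajascar S) (x y : S) : Prop := D.Nest x y ∨ D.Prec x y

open Relation

lemma _root_.Relation.wellFounded_of_finite_of_transGen_irrefl {α : Type*} [Finite α]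
    {R : α → α → Prop} (h : ∀ a, ¬ TransGen R a a) : WellFounded R :=
  have : IsTrans α (TransGen R) := ⟨fun _ _ _ => TransGen.trans⟩
  have : Std.Irrefl (TransGen R) := ⟨h⟩
  (Finite.wellFounded_of_trans_of_irrefl (TransGen R)).mono fun _ _ => TransGen.single

lemma P_rightUnique (D : Dallajascar S) : Relator.RightUnique D.P :=
  fun _ _ _ ha hb => Option.some.inj (ha.symm.trans hb)

lemma wellFounded_P (D : Dallajascar S) : WellFounded D.P :=
  wellFounded_of_finite_of_transGen_irrefl D.acyclic

lemma wellFounded_flip_P (D : Dallajascar S) : WellFounded (flip D.P) :=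
  wellFounded_of_finite_of_transGen_irrefl fun a h => D.acyclic a (transGen_swap.mp h)

lemma reflTransGen_P_root (D : Dallajascar S) (x : S) : ReflTransGen D.P x D.r := by
  induction x using D.wellFounded_flip_P.induction with
  | _ x ih =>
    by_cases hx : x = D.r
    · exact hx ▸ ReflTransGen.refl
    · obtain ⟨a, hxa⟩ := Option.ne_none_iff_exists'.mp (D.phi_ne_none x hx)
      exact ReflTransGen.head hxa (ih a hxa)

lemma eq_or_reflTransGen_of_P {D : Dallajascar S} {x y a : S} (hyx : ReflTransGen D.P y x)
    (hya : D.P y a) : y = x ∨ ReflTransGen D.P a x := by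
  rcases hyx.cases_head with rfl | ⟨b, hyb, hbx⟩
  · exact Or.inl rfl
  · exact Or.inr (D.P_rightUnique hya hyb ▸ hbx)

lemma Prec.of_reflTransGen {D : Dallajascar S} {x y x₀ y₀ : S} (h : D.Prec x y)
    (hx : ReflTransGen D.P x₀ x) (hy : ReflTransGen D.P y₀ y) : D.Prec x₀ y₀ := by
  obtain ⟨a, x', y', hxx', hyy', hx'a, hy'a, hidx⟩ := h
  exact ⟨a, x', y', hx.trans hxx', hy.trans hyy', hx'a, hy'a, hidx⟩

lemma prec_or_prec_of_siblings (D : Dallajascar S) {x y a : S} (hxy : x ≠ y)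
    (hxa : D.P x a) (hya : D.P y a) : D.Prec x y ∨ D.Prec y x := by
  obtain ⟨i, hi⟩ := List.mem_iff_getElem?.mp ((D.mem_H a x).mpr hxa)
  obtain ⟨j, hj⟩ := List.mem_iff_getElem?.mp ((D.mem_H a y).mpr hya)
  have hij : i ≠ j := by
    rintro rfl
    exact hxy (Option.some.inj (hi.symm.trans hj))
  rcases hij.lt_or_gt with hij | hji
  · exact Or.inl ⟨a, x, y, .refl, .refl, hxa, hya, i, j, hij, hi, hj⟩
  · exact Or.inr ⟨a, y, x, .refl, .refl, hya, hxa, j, i, hji, hj, hi⟩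

lemma eq_or_lt_or_lt_of_reflTransGen (D : Dallajascar S) (z : S) :
    ∀ x y : S, ReflTransGen D.P x z → ReflTransGen D.P y z → x = y ∨ D.Lt x y ∨ D.Lt y x := by
  induction z using D.wellFounded_P.induction with
  | _ z ih =>
    intro x y hxz hyz
    rcases hxz.cases_tail, hyz.cases_tail with ⟨rfl | ⟨x', hxx', hx'z⟩, rfl | ⟨y', hyy', hy'z⟩⟩
    · exact Or.inl rfl
    · exact Or.inr (Or.inl (Or.inl (TransGen.tail' hyy' hy'z)))
    · exact Or.inr (Or.inr (Or.inl (TransGen.tail' hxx' hx'z)))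
    by_cases hx'y' : x' = y'
    · exact ih x' hx'z x y hxx' (hx'y' ▸ hyy')
    rcases D.prec_or_prec_of_siblings hx'y' hx'z hy'z with h | h
    · exact Or.inr (Or.inl (Or.inr (h.of_reflTransGen hxx' hyy')))
    · exact Or.inr (Or.inr (Or.inr (h.of_reflTransGen hyy' hxx')))

lemma H_index_unique (D : Dallajascar S) {a y : S} {j k : ℕ} (hj : (D.H a)[j]? = some y)
    (hk : (D.H a)[k]? = some y) : j = k :=
  (List.getElem?_inj (List.getElem?_eq_some_iff.mp hj).1 (D.H_nodup a)).mp (hj.trans hk.symm)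

lemma lt_of_nest_of_prec {D : Dallajascar S} {x y z : S} (hxy : D.Nest x y)
    (hyz : D.Prec y z) : D.Lt x z := by
  obtain ⟨a, y', z', hyy', hzz', hy'a, hz'a, hidx⟩ := hyz
  have hx : ReflTransGen D.P x y' ∨ ReflTransGen D.P a x := by
    rcases ReflTransGen.total_of_right_unique D.P_rightUnique hyy' hxy.to_reflTransGen with h | h
    · rcases eq_or_reflTransGen_of_P h hy'a with rfl | h
      exacts [Or.inl .refl, Or.inr h]
    · exact Or.inl h
  rcases hx with hxy' | hax
  · exact Or.inr ⟨a, y', z', hxy', hzz', hy'a, hz'a, hidx⟩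
  · exact Or.inl ((TransGen.tail' hzz' hz'a).trans_left hax)

lemma Prec.trans {D : Dallajascar S} {x y z : S} (hxy : D.Prec x y) (hyz : D.Prec y z) :
    D.Prec x z := by
  obtain ⟨a, x', y₁, hxx', hyy₁, hx'a, hy₁a, i, j, hij, hi, hj⟩ := hxy
  obtain ⟨b, y₂, z', hyy₂, hzz', hy₂b, hz'b, k, l, hkl, hk, hl⟩ := hyz
  have hy : y₁ = y₂ ∨ ReflTransGen D.P a y₂ ∨ ReflTransGen D.P b y₁ := by
    rcases ReflTransGen.total_of_right_unique D.P_rightUnique hyy₁ hyy₂ with h | h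
    · rcases eq_or_reflTransGen_of_P h hy₁a with h | h
      exacts [Or.inl h, Or.inr (Or.inl h)]
    · rcases eq_or_reflTransGen_of_P h hy₂b with h | h
      exacts [Or.inl h.symm, Or.inr (Or.inr h)]
  rcases hy with rfl | hay₂ | hby₁
  · obtain rfl : a = b := D.P_rightUnique hy₁a hy₂b
    obtain rfl : j = k := D.H_index_unique hj hk
    exact ⟨a, x', z', hxx', hzz', hx'a, hz'b, i, l, hij.trans hkl, hi, hl⟩
  · exact ⟨b, y₂, z', (hxx'.tail hx'a).trans hay₂, hzz', hy₂b, hz'b, k, l, hkl, hk, hl⟩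
  · exact ⟨a, x', y₁, hxx', (hzz'.tail hz'b).trans hby₁, hx'a, hy₁a, i, j, hij, hi, hj⟩

lemma Lt.trans {D : Dallajascar S} {x y z : S} (hxy : D.Lt x y) (hyz : D.Lt y z) :
    D.Lt x z := by
  rcases hxy with hxy | hxy
  · rcases hyz with hyz | hyz
    exacts [Or.inl (hyz.trans hxy), lt_of_nest_of_prec hxy hyz]
  · rcases hyz with hyz | hyz
    exacts [Or.inr (hxy.of_reflTransGen .refl hyz.to_reflTransGen), Or.inr (hxy.trans hyz)]

/-- The relation `≺` induced by a Dallajascar is a strict total order: total on distinct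
elements, and transitive. -/
theorem lt_total_and_trans (D : Dallajascar S) :
    (∀ x y : S, x ≠ y → D.Lt x y ∨ D.Lt y x) ∧
    (∀ x y z : S, D.Lt x y → D.Lt y z → D.Lt x z) :=
  ⟨fun x y hxy => (D.eq_or_lt_or_lt_of_reflTransGen D.r x y (D.reflTransGen_P_root x)
      (D.reflTransGen_P_root y)).resolve_left hxy,
    fun _ _ _ => Lt.trans⟩

end Dallajascar
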